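/- Let d ≥ 1, A ≤ 0, and for g ∈ ℝ^d, z ∈ ℂ^d define Λ_g(z) = (1−4A)^{d/4}·exp(A‖g‖₂² + √(1−4A)·(Σ_{i=1}^d g_i z_i) − (Σ_{i=1}^d z_i²)/2) ∈ ℂ. Then for all x, w ∈ ℝ^d and b ∈ ℝ, sin(⟨x,w⟩ + b) = 𝔼_{g∼N(0,I_d)}[Im(exp(ib) · Λ_g(i·x) · Λ_g(w))], where i·x ∈ ℂ^d is the entrywise multiplication of x by the imaginary unit and Λ_g(w) is real. -/

import Mathlib

/-!
The feature map factorizes over coordinates, `Λ_g(z) = ∏ᵢ λ(gᵢ, zᵢ)`, and `N(0, I_d)` is a product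
measure, so `𝔼[Λ_g(z) Λ_g(z')]` is a product of one-dimensional Gaussian integrals of the
exponential of a quadratic polynomial in `t`. Completing the square, each of them equals
`exp(zᵢ z'ᵢ)`: the factor `(1 - 4A)^{-1/2}` produced by the Gaussian integral is cancelled by the
normalization `(1 - 4A)^{1/4}` of each of the two features. Hence `𝔼[Λ_g(z) Λ_g(z')] = exp(Σᵢ zᵢ z'ᵢ)`,
which for `z = i x`, `z' = w` is `exp(i⟨x, w⟩)`; multiplying by `exp(ib)` and taking imaginary
parts gives `sin(⟨x, w⟩ + b)`.
-/

open MeasureTheory ProbabilityTheory Real RealInnerProductSpace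

/-- The standard Gaussian probability measure `N(0, I_d)` on `ℝ^d`. -/
noncomputable def stdGaussian (d : ℕ) : Measure (EuclideanSpace ℝ (Fin d)) :=
  (Measure.pi fun _ => gaussianReal 0 1).map (MeasurableEquiv.toLp 2 (Fin d → ℝ))

/-- The complex-valued positive random feature map
`Λ_g(z) = (1-4A)^{d/4} exp(A‖g‖² + √(1-4A)·Σ gᵢzᵢ − (Σ zᵢ²)/2)` for `g ∈ ℝ^d`, `z ∈ ℂ^d`. -/
noncomputable def lambdaC (d : ℕ) (A : ℝ) (g : EuclideanSpace ℝ (Fin d))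
    (z : Fin d → ℂ) : ℂ :=
  (((1 - 4 * A) ^ ((d : ℝ) / 4) : ℝ) : ℂ) *
    Complex.exp (((A * ‖g‖ ^ 2 : ℝ) : ℂ)
      + ((Real.sqrt (1 - 4 * A) : ℝ) : ℂ) * (∑ i, (g i : ℂ) * z i)
      - (∑ i, z i ^ 2) / 2)

open Complex

theorem integral_cexp_quadratic_gaussianReal {a : ℝ} (ha : a < 1 / 2) (c : ℂ) :
    ∫ t : ℝ, cexp (a * t ^ 2 + c * t) ∂gaussianReal 0 1 =
      (√(1 - 2 * a) : ℂ)⁻¹ * cexp (c ^ 2 / (2 * (1 - 2 * a))) := by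
  have hs : 0 < 1 - 2 * a := by linarith
  have hb : ((a : ℂ) - 1 / 2).re < 0 := by simp; linarith
  have hdensity (t : ℝ) : gaussianPDFReal 0 1 t • cexp (a * t ^ 2 + c * t) =
      (√(2 * π) : ℂ)⁻¹ * cexp ((a - 1 / 2) * t ^ 2 + c * t + 0) := by
    simp only [gaussianPDFReal_def, real_smul, ofReal_mul, ofReal_exp, mul_assoc, ← Complex.exp_add]
    push_cast
    ring_nf
  simp_rw [integral_gaussianReal_eq_integral_smul one_ne_zero, hdensity, integral_const_mul,
    integral_cexp_quadratic hb]
  have hs' : (1 - 2 * a : ℂ) ≠ 0 := by exact_mod_cast hs.ne'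
  have hroot : ((π : ℂ) / -(a - 1 / 2)) ^ (1 / 2 : ℂ) = (√(2 * π) / √(1 - 2 * a) : ℝ) := by
    rw [← sqrt_div' _ hs.le, sqrt_eq_rpow, ofReal_cpow (by positivity)]
    congr 1 <;> push_cast
    · rw [div_eq_div_iff (by contrapose! hs'; linear_combination 2 * hs') hs']
      ring
    · norm_num
  have : (√(2 * π) : ℂ) ≠ 0 := by exact_mod_cast (by positivity : √(2 * π) ≠ 0)
  rw [hroot, show 4 * ((a : ℂ) - 1 / 2) = -(2 * (1 - 2 * a)) by ring, div_neg, zero_sub, neg_neg]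
  push_cast
  field_simp

theorem integrable_cexp_quadratic_gaussianReal {a : ℝ} (ha : a < 1 / 2) (c : ℂ) :
    Integrable (fun t : ℝ ↦ cexp (a * t ^ 2 + c * t)) (gaussianReal 0 1) := by
  refine .of_integral_ne_zero ?_
  rw [integral_cexp_quadratic_gaussianReal ha]
  have : √(1 - 2 * a) ≠ 0 := by rw [sqrt_ne_zero']; linarith
  simpa using this

noncomputable def lambdaCoord (A t : ℝ) (u : ℂ) : ℂ :=
  ((1 - 4 * A) ^ (1 / 4 : ℝ) : ℝ) * cexp (A * t ^ 2 + √(1 - 4 * A) * t * u - u ^ 2 / 2)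

theorem lambdaC_eq_prod {d : ℕ} {A : ℝ} (hA : A ≤ 1 / 4) (g : EuclideanSpace ℝ (Fin d))
    (z : Fin d → ℂ) : lambdaC d A g z = ∏ i, lambdaCoord A (g i) (z i) := by
  have hpow : (1 - 4 * A) ^ ((d : ℝ) / 4) = ((1 - 4 * A) ^ (1 / 4 : ℝ)) ^ d := by
    rw [← rpow_natCast, ← rpow_mul (by linarith)]
    ring_nf
  simp only [lambdaC, lambdaCoord, Finset.prod_mul_distrib, Finset.prod_const, Finset.card_univ,
    Fintype.card_fin, ← Complex.exp_sum, hpow, EuclideanSpace.real_norm_sq_eq]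
  push_cast
  simp only [Finset.mul_sum, Finset.sum_div, ← Finset.sum_add_distrib, ← Finset.sum_sub_distrib]
  congr 2
  exact Finset.sum_congr rfl fun i _ ↦ by ring

theorem lambdaCoord_mul {A : ℝ} (hA : A ≤ 1 / 4) (t : ℝ) (u v : ℂ) :
    lambdaCoord A t u * lambdaCoord A t v = (√(1 - 4 * A) : ℂ) * cexp (-(u ^ 2 + v ^ 2) / 2) *
      cexp ((2 * A : ℝ) * t ^ 2 + √(1 - 4 * A) * (u + v) * t) := by
  have hroot : ((1 - 4 * A) ^ (1 / 4 : ℝ)) ^ 2 = √(1 - 4 * A) := by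
    rw [← rpow_natCast, ← rpow_mul (by linarith), sqrt_eq_rpow]
    norm_num
  rw [lambdaCoord, lambdaCoord, mul_mul_mul_comm, ← ofReal_mul, ← sq, hroot, ← Complex.exp_add,
    mul_assoc _ (cexp _), ← Complex.exp_add]
  congr 2
  push_cast
  ring

theorem integral_lambdaCoord_mul {A : ℝ} (hA : A < 1 / 4) (u v : ℂ) :
    ∫ t, lambdaCoord A t u * lambdaCoord A t v ∂gaussianReal 0 1 = cexp (u * v) := by
  have hs : 0 < 1 - 4 * A := by linarith
  simp_rw [lambdaCoord_mul hA.le, integral_const_mul,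
    integral_cexp_quadratic_gaussianReal (show 2 * A < 1 / 2 by linarith)]
  have hroot : (√(1 - 4 * A) : ℂ) ≠ 0 := by exact_mod_cast (sqrt_pos.2 hs).ne'
  have hsq : (√(1 - 4 * A) : ℂ) ^ 2 = 1 - 4 * A := by
    exact_mod_cast sq_sqrt hs.le
  have hs' : (1 - 4 * A : ℂ) ≠ 0 := by exact_mod_cast hs.ne'
  rw [show (1 : ℝ) - 2 * (2 * A) = 1 - 4 * A by ring, mul_mul_mul_comm, mul_inv_cancel₀ hroot,
    one_mul, ← Complex.exp_add, mul_pow, hsq]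
  congr 1
  push_cast
  rw [show (1 : ℂ) - 2 * (2 * A) = 1 - 4 * A by ring]
  field_simp
  ring

theorem integrable_lambdaCoord_mul {A : ℝ} (hA : A < 1 / 4) (u v : ℂ) :
    Integrable (fun t ↦ lambdaCoord A t u * lambdaCoord A t v) (gaussianReal 0 1) := by
  simp_rw [lambdaCoord_mul hA.le]
  exact (integrable_cexp_quadratic_gaussianReal (by linarith) _).const_mul _

theorem integral_stdGaussian_prod {𝕜 : Type*} [RCLike 𝕜] {d : ℕ} (f : Fin d → ℝ → 𝕜) :
    ∫ g, ∏ i, f i (g i) ∂stdGaussian d = ∏ i, ∫ t, f i t ∂gaussianReal 0 1 := by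
  rw [_root_.stdGaussian, integral_map_equiv]
  exact integral_fintype_prod_eq_prod f

theorem integrable_stdGaussian_prod {𝕜 : Type*} [RCLike 𝕜] {d : ℕ} {f : Fin d → ℝ → 𝕜}
    (hf : ∀ i, Integrable (f i) (gaussianReal 0 1)) :
    Integrable (fun g ↦ ∏ i, f i (g i)) (stdGaussian d) := by
  rw [_root_.stdGaussian, integrable_map_equiv]
  exact .fintype_prod hf

theorem integral_lambdaC_mul {d : ℕ} {A : ℝ} (hA : A < 1 / 4) (z z' : Fin d → ℂ) :
    ∫ g, lambdaC d A g z * lambdaC d A g z' ∂stdGaussian d = cexp (∑ i, z i * z' i) := by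
  simp_rw [lambdaC_eq_prod hA.le, ← Finset.prod_mul_distrib]
  rw [integral_stdGaussian_prod (fun i t ↦ lambdaCoord A t (z i) * lambdaCoord A t (z' i))]
  simp_rw [integral_lambdaCoord_mul hA, Complex.exp_sum]

theorem integrable_lambdaC_mul {d : ℕ} {A : ℝ} (hA : A < 1 / 4) (z z' : Fin d → ℂ) :
    Integrable (fun g ↦ lambdaC d A g z * lambdaC d A g z') (stdGaussian d) := by
  simp_rw [lambdaC_eq_prod hA.le, ← Finset.prod_mul_distrib]
  exact integrable_stdGaussian_prod fun i ↦ integrable_lambdaCoord_mul hA _ _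

theorem stmt_12_general (d : ℕ) (A : ℝ) (hA : A ≤ 0)
    (x w : EuclideanSpace ℝ (Fin d)) (b : ℝ) :
    Real.sin (⟪x, w⟫ + b) =
      ∫ g, (Complex.exp (Complex.I * b) *
          lambdaC d A g (fun j => Complex.I * (x j : ℂ)) *
          lambdaC d A g (fun j => ((w j : ℝ) : ℂ))).im ∂(stdGaussian d) := by
  have hA' : A < 1 / 4 := by linarith
  have hinner : ∑ j, I * x j * w j = (⟪x, w⟫ : ℂ) * I := by
    simp only [PiLp.inner_apply, RCLike.inner_apply, conj_trivial, ofReal_sum, ofReal_mul,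
      Finset.sum_mul]
    exact Finset.sum_congr rfl fun j _ ↦ by ring
  simp_rw [mul_assoc (cexp _)]
  refine Eq.trans ?_ (integral_im ((integrable_lambdaC_mul hA' _ _).const_mul _)).symm
  rw [integral_const_mul, integral_lambdaC_mul hA', hinner, ← Complex.exp_add, mul_comm I,
    ← add_mul, ← ofReal_add, add_comm b]
  exact (exp_ofReal_mul_I_im _).symm

theorem stmt_12 (d : ℕ) (hd : 1 ≤ d) (A : ℝ) (hA : A ≤ 0)
    (x w : EuclideanSpace ℝ (Fin d)) (b : ℝ) :
    Real.sin (⟪x, w⟫ + b) =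
      ∫ g, (Complex.exp (Complex.I * b) *
          lambdaC d A g (fun j => Complex.I * (x j : ℂ)) *
          lambdaC d A g (fun j => ((w j : ℝ) : ℂ))).im ∂(stdGaussian d) :=
  stmt_12_general d A hA x w b
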